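/- arXiv:1811.08187 — 2 statements merged into one kernel-verified Lean document; each statement's English description precedes it below -/
import Mathlib

section
/- If partitions p and q of Fin n are orthogonal, then their common refinement (the meet p ⊓ q in the lattice of partitions, whose blocks are the nonempty intersections B ∩ C with B a block of p and C a block of q) is the discrete partition into singletons. -/
/-- A multigraph with vertex type `V` and edge-index type `E`:
each edge has an ordered pair of endpoints. -/
structure Multigraph (V : Type*) (E : Type*) where
  ends : E → V × V

namespace Multigraph

variable {V E : Type*}

/-- A walk in a multigraph, traversing edges in either direction. -/
inductive Walk (G : Multigraph V E) : V → V → Type _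
  | nil (v : V) : Walk G v v
  | cons {u v w : V} (e : E)
      (h : G.ends e = (u, v) ∨ G.ends e = (v, u)) (p : Walk G v w) : Walk G u w

/-- The list of edges used by a walk. -/
def Walk.edges {G : Multigraph V E} : ∀ {u v : V}, G.Walk u v → List E
  | _, _, .nil _ => []
  | _, _, .cons e _ p => e :: p.edges

/-- A multigraph is connected if any two vertices are joined by a walk. -/
def Connected (G : Multigraph V E) : Prop := ∀ u v : V, Nonempty (G.Walk u v)

/-- A multigraph is acyclic if it has no closed trail of positive length
(equivalently, no cycle). -/
def Acyclic (G : Multigraph V E) : Prop :=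
  ∀ (v : V) (w : G.Walk v v), w.edges.Nodup → w.edges = []

/-- A multigraph is a tree if it is acyclic and connected. -/
def IsTree (G : Multigraph V E) : Prop := G.Acyclic ∧ G.Connected

end Multigraph

/-- The meeting graph of two partitions (setoids) of `Fin n`: vertices are
the blocks of `p` together with the blocks of `q`, and for each `i : Fin n`
there is one edge joining the `p`-block of `i` to the `q`-block of `i`. -/
def meetingGraph {n : ℕ} (p q : Setoid (Fin n)) :
    Multigraph (Quotient p ⊕ Quotient q) (Fin n) :=
  ⟨fun i => (Sum.inl (Quotient.mk p i), Sum.inr (Quotient.mk q i))⟩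

/-- Two partitions are orthogonal when their meeting graph is a tree
(acyclic and connected). -/
def Orthogonal {n : ℕ} (p q : Setoid (Fin n)) : Prop :=
  (meetingGraph p q).IsTree

/-- The number of blocks of a partition. -/
noncomputable def numBlocks {n : ℕ} (p : Setoid (Fin n)) : ℕ := Nat.card (Quotient p)

/-- The dual `P⊥` of a set of partitions. -/
def orthSet {n : ℕ} (P : Set (Setoid (Fin n))) : Set (Setoid (Fin n)) :=
  {q | ∀ p ∈ P, Orthogonal q p}

/-- Two parallel edges `e ≠ f` form a cycle of length two. -/
theorem Multigraph.Acyclic.injective_ends {V E : Type*} {G : Multigraph V E} (hG : G.Acyclic) :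
    Function.Injective G.ends := by
  intro e f hef
  by_contra hne
  let cycle : G.Walk (G.ends e).1 (G.ends e).1 :=
    .cons e (Or.inl rfl) (.cons f (Or.inr (hef.symm.trans rfl)) (.nil _))
  have hnodup : cycle.edges.Nodup := by simp [cycle, Multigraph.Walk.edges, hne]
  simpa [cycle, Multigraph.Walk.edges] using hG _ cycle hnodup

theorem ker_meetingGraph_ends {n : ℕ} (p q : Setoid (Fin n)) :
    Setoid.ker (meetingGraph p q).ends = p ⊓ q := by
  ext i j
  simp only [Setoid.ker_def, meetingGraph, Prod.mk.injEq, Sum.inl.injEq, Sum.inr.injEq,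
    Quotient.eq]
  exact Setoid.inf_iff_and.symm

/-- if `p ⊥ q` then the common refinement `p ⊓ q` is the
discrete partition into singletons (the bottom of the partition lattice). -/
theorem orthogonal_inf_eq_bot {n : ℕ} {p q : Setoid (Fin n)}
    (h : Orthogonal p q) : p ⊓ q = ⊥ := by
  rw [← ker_meetingGraph_ends, Setoid.ker_eq_bot_iff]
  exact h.1.injective_ends
end

section
/- For partitions p, q of Fin n (n ≥ 1), the following are equivalent: (1) p ⊥ q (the meeting graph is a tree); (2) the join p ⊔ q in the partition lattice is the one-block partition and |p| + |q| = n + 1. -/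
/-! ### Auxiliary multigraph machinery -/

namespace Multigraph

variable {V E : Type*} {G : Multigraph V E}

/-- Concatenation of walks. -/
def Walk.append : ∀ {u v w : V}, G.Walk u v → G.Walk v w → G.Walk u w
  | _, _, _, .nil _, r => r
  | _, _, _, .cons e h p, r => .cons e h (p.append r)

/-- Reversal of a walk. -/
def Walk.reverse : ∀ {u v : V}, G.Walk u v → G.Walk v u
  | _, _, .nil v => .nil v
  | _, _, .cons e h p => p.reverse.append (.cons e h.symm (.nil _))

/-- Length of a walk. -/
def Walk.length : ∀ {u v : V}, G.Walk u v → ℕ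
  | _, _, .nil _ => 0
  | _, _, .cons _ _ p => p.length + 1

lemma Walk.eq_of_length_zero : ∀ {u v : V} (w : G.Walk u v), w.length = 0 → u = v
  | _, _, .nil _, _ => rfl
  | _, _, .cons _ _ p, h => by simp [Walk.length] at h

/-- Any connected multigraph on a finite nonempty vertex set satisfies
`|V| ≤ |E| + 1`. -/
lemma card_le_of_connected [Finite V] [Finite E] (G : Multigraph V E)
    (hc : G.Connected) (v₀ : V) : Nat.card V ≤ Nat.card E + 1 := by
  classical
  have hP : ∀ u : V, ∃ k, ∃ w : G.Walk u v₀, w.length = k := fun u => by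
    obtain ⟨w⟩ := hc u v₀; exact ⟨w.length, w, rfl⟩
  set d : V → ℕ := fun u => Nat.find (hP u) with hd_def
  set Q : V → E → Prop := fun u e =>
    d u ≠ 0 ∧ ∃ x, ∃ _h : G.ends e = (u, x) ∨ G.ends e = (x, u),
      ∃ r : G.Walk x v₀, r.length = d u - 1 with hQ_def
  have hex : ∀ u : V, u ≠ v₀ → ∃ e, Q u e := by
    intro u hu
    obtain ⟨w, hw⟩ := Nat.find_spec (hP u)
    have hd0 : d u ≠ 0 := fun h0 => hu (w.eq_of_length_zero (hw.trans h0))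
    cases w with
    | nil => exact absurd hw.symm hd0
    | cons e h r =>
      refine ⟨e, hd0, _, h, r, ?_⟩
      have : r.length + 1 = d u := hw
      omega
  have hinj : ∀ u u' e, Q u e → Q u' e → u = u' := by
    rintro u u' e ⟨hu0, x, h, r, hr⟩ ⟨hu0', x', h', r', hr'⟩
    by_contra hne
    rcases h with h | h <;> rcases h' with h' | h' <;>
      (have hpe := h.symm.trans h'; rw [Prod.mk.injEq] at hpe; obtain ⟨he1, he2⟩ := hpe)
    · exact hne he1
    · -- u = x', x = u'
      have d1 : d u' ≤ d u - 1 := by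
        rw [← he2]; exact hr ▸ Nat.find_le ⟨r, rfl⟩
      have d2 : d u ≤ d u' - 1 := by
        rw [he1]; exact hr' ▸ Nat.find_le ⟨r', rfl⟩
      omega
    · -- x = u', u = x'
      have d1 : d u' ≤ d u - 1 := by
        rw [← he1]; exact hr ▸ Nat.find_le ⟨r, rfl⟩
      have d2 : d u ≤ d u' - 1 := by
        rw [he2]; exact hr' ▸ Nat.find_le ⟨r', rfl⟩
      omega
    · exact hne he2
  choose f hf using fun u : {u : V // u ≠ v₀} => hex u.1 u.2
  have hfinj : Function.Injective f := fun a b hab =>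
    Subtype.ext (hinj _ _ (f b) (hab ▸ hf a) (hf b))
  have : Fintype V := Fintype.ofFinite V
  have : Fintype E := Fintype.ofFinite E
  have h1 : Fintype.card {u : V // u ≠ v₀} ≤ Fintype.card E :=
    Fintype.card_le_of_injective f hfinj
  have h2 : Fintype.card {u : V // u ≠ v₀} = Fintype.card V - 1 := by
    have := Fintype.card_subtype_compl (fun u : V => u = v₀)
    simpa [Fintype.card_subtype_eq] using this
  have h3 : 0 < Fintype.card V := Fintype.card_pos_iff.mpr ⟨v₀⟩
  rw [Nat.card_eq_fintype_card, Nat.card_eq_fintype_card]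
  omega

/-- Deleting an edge from a multigraph. -/
def delete (G : Multigraph V E) (e₀ : E) : Multigraph V {i : E // i ≠ e₀} :=
  ⟨fun i => G.ends i.1⟩

/-- A walk avoiding an edge gives a walk in the deleted graph. -/
lemma avoid {e₀ : E} : ∀ {u v : V} (w : G.Walk u v), e₀ ∉ w.edges →
    Nonempty ((G.delete e₀).Walk u v) := by
  intro u v w
  induction w with
  | nil v => exact fun _ => ⟨.nil v⟩
  | cons e h p ih =>
    intro hm
    simp only [Walk.edges, List.mem_cons, not_or] at hm
    obtain ⟨p'⟩ := ih hm.2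
    exact ⟨.cons ⟨e, fun hh => hm.1 hh.symm⟩ h p'⟩

/-- If the endpoints of `e` remain connected after deleting `e`, then the
deleted graph of a connected graph is connected. -/
lemma connected_delete (hc : G.Connected) {e : E} {a b : V}
    (h : G.ends e = (a, b) ∨ G.ends e = (b, a))
    (W₀ : (G.delete e).Walk a b) : (G.delete e).Connected := by
  intro u v
  obtain ⟨w⟩ := hc u v
  induction w with
  | nil v => exact ⟨.nil v⟩
  | @cons s t w' f hf p ih =>
    obtain ⟨p'⟩ := ih
    by_cases hfe : f = e
    · subst hfe
      have step : Nonempty ((G.delete f).Walk s t) := by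
        rcases hf with hf | hf <;> rcases h with h | h <;>
          (have hpe := hf.symm.trans h; rw [Prod.mk.injEq] at hpe;
            obtain ⟨he1, he2⟩ := hpe)
        · subst he1; subst he2; exact ⟨W₀⟩
        · subst he1; subst he2; exact ⟨W₀.reverse⟩
        · subst he1; subst he2; exact ⟨W₀.reverse⟩
        · subst he1; subst he2; exact ⟨W₀⟩
      exact ⟨step.some.append p'⟩
    · exact ⟨.cons ⟨f, hfe⟩ hf p'⟩

end Multigraph

/-! ### The block (simple) graph of two partitions -/

/-- The simple graph underlying the meeting graph. -/
def blockGraph {n : ℕ} (p q : Setoid (Fin n)) :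
    SimpleGraph (Quotient p ⊕ Quotient q) where
  Adj u v := ∃ i : Fin n,
    (meetingGraph p q).ends i = (u, v) ∨ (meetingGraph p q).ends i = (v, u)
  symm := ⟨fun u v ⟨i, h⟩ => ⟨i, h.symm⟩⟩
  loopless := by
    refine ⟨?_⟩
    rintro u ⟨i, h | h⟩ <;>
      · simp only [meetingGraph, Prod.mk.injEq] at h
        exact absurd (h.1.trans h.2.symm) (by simp)

/-- The edge labelling map. -/
def eps {n : ℕ} (p q : Setoid (Fin n)) (i : Fin n) :
    Sym2 (Quotient p ⊕ Quotient q) :=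
  s(Sum.inl (Quotient.mk p i), Sum.inr (Quotient.mk q i))

namespace MeetAux

variable {n : ℕ} {p q : Setoid (Fin n)}

lemma eps_eq {i : Fin n} {u v : Quotient p ⊕ Quotient q}
    (h : (meetingGraph p q).ends i = (u, v)) : eps p q i = s(u, v) := by
  simp only [meetingGraph, Prod.mk.injEq] at h
  rw [eps, h.1, h.2]

lemma edgeSet_eq : (blockGraph p q).edgeSet = Set.range (eps p q) := by
  ext s
  induction s using Sym2.ind with
  | _ u v =>
    simp only [SimpleGraph.mem_edgeSet, Set.mem_range]
    constructor
    · rintro ⟨i, h | h⟩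
      · exact ⟨i, eps_eq h⟩
      · exact ⟨i, (eps_eq h).trans Sym2.eq_swap⟩
    · rintro ⟨i, hi⟩
      rw [eps, Sym2.eq_iff] at hi
      rcases hi with ⟨h1, h2⟩ | ⟨h1, h2⟩
      · exact ⟨i, Or.inl (by rw [← h1, ← h2]; rfl)⟩
      · exact ⟨i, Or.inr (by rw [← h1, ← h2]; rfl)⟩

/-- Multigraph walks transfer to reachability in the block graph. -/
lemma reachable_of_walk {u v : Quotient p ⊕ Quotient q}
    (w : (meetingGraph p q).Walk u v) : (blockGraph p q).Reachable u v := by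
  induction w with
  | nil v => exact SimpleGraph.Reachable.refl v
  | @cons a b c e h _ ih =>
    have hadj : (blockGraph p q).Adj a b := ⟨e, h⟩
    exact hadj.reachable.trans ih

/-- Simple graph walks lift to multigraph walks whose edge labels match. -/
lemma exists_mg_walk {u v : Quotient p ⊕ Quotient q}
    (W : (blockGraph p q).Walk u v) :
    ∃ w : (meetingGraph p q).Walk u v, w.edges.map (eps p q) = W.edges := by
  induction W with
  | nil => exact ⟨Multigraph.Walk.nil _, rfl⟩
  | @cons a b c hadj W' ih =>
    obtain ⟨w', hw'⟩ := ih
    obtain ⟨i, hi⟩ := hadj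
    refine ⟨Multigraph.Walk.cons i hi w', ?_⟩
    have hei : eps p q i = s(a, b) := by
      rcases hi with hi | hi
      · exact eps_eq hi
      · exact (eps_eq hi).trans Sym2.eq_swap
    simp [Multigraph.Walk.edges, hw', hei, SimpleGraph.Walk.edges_cons]
    rfl

/-- An element touches a vertex of the meeting graph. -/
def touch (i : Fin n) : Quotient p ⊕ Quotient q → Prop
  | Sum.inl a => Quotient.mk p i = a
  | Sum.inr b => Quotient.mk q i = b

lemma touch_rel {i j : Fin n} {v : Quotient p ⊕ Quotient q}
    (hi : touch i v) (hj : touch j v) : (p ⊔ q) i j := by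
  cases v with
  | inl a =>
    exact Setoid.le_def.mp le_sup_left (Quotient.exact ((hi : _ = a).trans hj.symm))
  | inr b =>
    exact Setoid.le_def.mp le_sup_right (Quotient.exact ((hi : _ = b).trans hj.symm))

lemma rel_of_walk : ∀ {u v : Quotient p ⊕ Quotient q},
    (meetingGraph p q).Walk u v →
    ∀ i j : Fin n, touch i u → touch j v → (p ⊔ q) i j := by
  intro u v w
  induction w with
  | nil v => exact fun i j hi hj => touch_rel hi hj
  | @cons u x _ e h r ih =>
    intro i j hi hj
    have h1 : touch e u ∧ touch e x := by
      rcases h with h | h <;> simp only [meetingGraph, Prod.mk.injEq] at h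
      · exact ⟨by rw [← h.1]; exact rfl, by rw [← h.2]; exact rfl⟩
      · exact ⟨by rw [← h.2]; exact rfl, by rw [← h.1]; exact rfl⟩
    exact Setoid.trans' _ (touch_rel hi h1.1) (ih e j h1.2 hj)

lemma sup_top_of_connected (hc : (meetingGraph p q).Connected) :
    p ⊔ q = ⊤ := by
  rw [Setoid.eq_top_iff]
  intro i j
  obtain ⟨w⟩ := hc (Sum.inl (Quotient.mk p i)) (Sum.inl (Quotient.mk p j))
  exact rel_of_walk w i j rfl rfl

lemma walk_of_rel (i j : Fin n) (h : (p ⊔ q) i j) :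
    Nonempty ((meetingGraph p q).Walk
      (Sum.inl (Quotient.mk p i)) (Sum.inl (Quotient.mk p j))) := by
  rw [Setoid.sup_eq_eqvGen] at h
  have h' : Relation.EqvGen (fun x y => p x y ∨ q x y) i j := h
  clear h
  induction h' with
  | rel x y hxy =>
    rcases hxy with hxy | hxy
    · rw [Quotient.sound hxy]
      exact ⟨.nil _⟩
    · refine ⟨.cons x (Or.inl rfl) (.cons y (Or.inr ?_) (.nil _))⟩
      have hq : Quotient.mk q x = Quotient.mk q y := Quotient.sound hxy
      show (meetingGraph p q).ends y = (Sum.inl (Quotient.mk p y), Sum.inr (Quotient.mk q x))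
      rw [hq]
      rfl
  | refl x => exact ⟨.nil _⟩
  | symm x y _ ih => exact ih.map Multigraph.Walk.reverse
  | trans x y z _ _ ih1 ih2 => exact ⟨ih1.some.append ih2.some⟩

lemma connected_of_sup_top (h : p ⊔ q = ⊤) : (meetingGraph p q).Connected := by
  have key : ∀ i j : Fin n, Nonempty ((meetingGraph p q).Walk
      (Sum.inl (Quotient.mk p i)) (Sum.inl (Quotient.mk p j))) := by
    intro i j
    refine walk_of_rel i j ?_
    rw [h]
    trivial
  have toInl : ∀ u : Quotient p ⊕ Quotient q, ∃ i : Fin n,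
      Nonempty ((meetingGraph p q).Walk u (Sum.inl (Quotient.mk p i))) := by
    rintro (a | b)
    · obtain ⟨i, rfl⟩ := Quotient.exists_rep a
      exact ⟨i, ⟨.nil _⟩⟩
    · obtain ⟨i, rfl⟩ := Quotient.exists_rep b
      exact ⟨i, ⟨(Multigraph.Walk.cons i (Or.inl rfl) (.nil _)).reverse⟩⟩
  intro u v
  obtain ⟨i, ⟨wu⟩⟩ := toInl u
  obtain ⟨j, ⟨wv⟩⟩ := toInl v
  obtain ⟨wm⟩ := key i j
  exact ⟨(wu.append wm).append wv.reverse⟩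

lemma eps_injective (hA : (meetingGraph p q).Acyclic) :
    Function.Injective (eps p q) := by
  intro i j hij
  by_contra hne
  rw [eps, eps, Sym2.eq_iff] at hij
  rcases hij with ⟨h1, h2⟩ | ⟨h1, h2⟩
  · injection h1 with h1'
    injection h2 with h2'
    have hj' : (meetingGraph p q).ends j
        = (Sum.inl (Quotient.mk p i), Sum.inr (Quotient.mk q i)) := by
      rw [h1', h2']
      rfl
    have := hA _ (Multigraph.Walk.cons i (Or.inl rfl)
        (Multigraph.Walk.cons j (Or.inr hj') (Multigraph.Walk.nil _)))
      (by simp [Multigraph.Walk.edges, hne])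
    simp [Multigraph.Walk.edges] at this
  · exact absurd h1 (by simp)

end MeetAux

open MeetAux in
/-- `p ⊥ q` iff the join `p ⊔ q` is the one-block partition
and `|p| + |q| = n + 1`. -/
theorem orthogonal_iff_sup_top_and_card {n : ℕ} (hn : 1 ≤ n)
    (p q : Setoid (Fin n)) :
    Orthogonal p q ↔ p ⊔ q = ⊤ ∧ numBlocks p + numBlocks q = n + 1 := by
  classical
  have hcardV : Nat.card (Quotient p ⊕ Quotient q) = numBlocks p + numBlocks q :=
    Nat.card_sum
  constructor
  · rintro ⟨hA, hC⟩
    refine ⟨sup_top_of_connected hC, ?_⟩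
    have : Fintype (Quotient p ⊕ Quotient q) := Fintype.ofFinite _
    have hG'conn : (blockGraph p q).Connected := by
      rw [SimpleGraph.connected_iff]
      refine ⟨fun u v => reachable_of_walk (hC u v).some,
        ⟨Sum.inl (Quotient.mk p ⟨0, hn⟩)⟩⟩
    have hG'ac : (blockGraph p q).IsAcyclic := by
      intro v c hc
      obtain ⟨w, hw⟩ := exists_mg_walk c
      have hnd : w.edges.Nodup := by
        have : (w.edges.map (eps p q)).Nodup := by
          rw [hw]; exact hc.isTrail.edges_nodup
        exact this.of_map _
      have hlen : c.edges ≠ [] := by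
        have h3 := hc.three_le_length
        intro hnil
        rw [← SimpleGraph.Walk.length_edges, hnil] at h3
        simp at h3
      have := hA _ w hnd
      rw [← hw, this] at hlen
      simp at hlen
    have htree : (blockGraph p q).IsTree := ⟨hG'conn, hG'ac⟩
    have : Fintype (blockGraph p q).edgeSet := Fintype.ofFinite _
    have hcard := htree.card_edgeFinset
    have hE : (blockGraph p q).edgeFinset.card = n := by
      rw [SimpleGraph.edgeFinset, Set.toFinset_card, ← Nat.card_eq_fintype_card]
      rw [show (blockGraph p q).edgeSet = Set.range (eps p q) from edgeSet_eq,
        Nat.card_range_of_injective (eps_injective hA)]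
      simp
    rw [hE, ← Nat.card_eq_fintype_card, hcardV] at hcard
    omega
  · rintro ⟨hsup, hcard⟩
    have hC : (meetingGraph p q).Connected := connected_of_sup_top hsup
    refine ⟨?_, hC⟩
    intro v w hnd
    by_contra hne
    cases w with
    | nil => exact hne rfl
    | cons e h r =>
      simp only [Multigraph.Walk.edges, List.nodup_cons] at hnd
      obtain ⟨W₀⟩ := Multigraph.avoid r hnd.1
      have hc2 := Multigraph.connected_delete hC h W₀.reverse
      have hle := Multigraph.card_le_of_connected _ hc2 v
      have hEcard : Nat.card {i : Fin n // i ≠ e} = n - 1 := by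
        rw [Nat.card_eq_fintype_card]
        have := Fintype.card_subtype_compl (fun i : Fin n => i = e)
        simpa [Fintype.card_subtype_eq] using this
      rw [hcardV, hcard, hEcard] at hle
      omega
end
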